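/- Let R be a commutative ring and (M, D) a ℤ/2-graded R-module with an odd endomorphism D satisfying D² = W·id for some W ∈ R. Then for every homogeneous graded endomorphism f of M that commutes in the graded sense with D (i.e. 𝔡(f) = D∘f − (−1)^{|f|} f∘D = 0), the class of 2·W·f is a 𝔡-coboundary: there exists a homogeneous g with 𝔡(g) = 2·W·f. Concretely, g = D ∘ f works. -/
import Mathlib


/-- Let `(M,D)` be a ℤ/2-graded factorization of `W` (`D² = W • id`).
If a homogeneous graded endomorphism `f` graded-commutes with `D` (i.e. `𝔡(f) = 0`),
then `2·W·f` is a `𝔡`-coboundary; concretely `g = D ∘ f` satisfies `𝔡(g) = 2·W·f`.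
Graded maps are encoded by their components; the two conjuncts are the even and odd
parity cases. -/
theorem two_W_is_coboundary
    {R : Type*} [CommRing R] (W : R)
    {M0 M1 : Type*} [AddCommGroup M0] [AddCommGroup M1] [Module R M0] [Module R M1]
    (d0 : M0 →ₗ[R] M1) (d1 : M1 →ₗ[R] M0)
    (hsq0 : d1 ∘ₗ d0 = W • (LinearMap.id : M0 →ₗ[R] M0))
    (hsq1 : d0 ∘ₗ d1 = W • (LinearMap.id : M1 →ₗ[R] M1)) :
    -- even f = (f0, f1) with 𝔡f = 0; then g = D∘f = (d0∘f0, d1∘f1) is odd and 𝔡g = 2W·f: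
    (∀ (f0 : M0 →ₗ[R] M0) (f1 : M1 →ₗ[R] M1),
      d0 ∘ₗ f0 - f1 ∘ₗ d0 = 0 → d1 ∘ₗ f1 - f0 ∘ₗ d1 = 0 →
        d1 ∘ₗ (d0 ∘ₗ f0) + (d1 ∘ₗ f1) ∘ₗ d0 = (2 * W) • f0 ∧
        d0 ∘ₗ (d1 ∘ₗ f1) + (d0 ∘ₗ f0) ∘ₗ d1 = (2 * W) • f1)
    ∧
    -- odd f = (f0, f1) with 𝔡f = 0; then g = D∘f = (d1∘f0, d0∘f1) is even and 𝔡g = 2W·f: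
    (∀ (f0 : M0 →ₗ[R] M1) (f1 : M1 →ₗ[R] M0),
      d1 ∘ₗ f0 + f1 ∘ₗ d0 = 0 → d0 ∘ₗ f1 + f0 ∘ₗ d1 = 0 →
        d0 ∘ₗ (d1 ∘ₗ f0) - (d0 ∘ₗ f1) ∘ₗ d0 = (2 * W) • f0 ∧
        d1 ∘ₗ (d0 ∘ₗ f1) - (d1 ∘ₗ f0) ∘ₗ d1 = (2 * W) • f1) := by
  have sq0 : ∀ x, d1 (d0 x) = W • x := fun x => by
    have := congrArg (fun g => g x) hsq0; simpa using this
  have sq1 : ∀ x, d0 (d1 x) = W • x := fun x => by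
    have := congrArg (fun g => g x) hsq1; simpa using this
  constructor
  · intro f0 f1 h1 h2
    have e1 : ∀ x, d0 (f0 x) = f1 (d0 x) := fun x => by
      have := congrArg (fun g => g x) h1; simpa [sub_eq_zero] using this
    have e2 : ∀ x, d1 (f1 x) = f0 (d1 x) := fun x => by
      have := congrArg (fun g => g x) h2; simpa [sub_eq_zero] using this
    constructor <;> ext x <;>
      simp only [LinearMap.add_apply, LinearMap.comp_apply, LinearMap.smul_apply]
    · rw [← e1]; simp [sq0, two_mul, add_smul]
    · rw [← e2]; simp [sq1, two_mul, add_smul]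
  · intro f0 f1 h1 h2
    have e1 : ∀ x, d1 (f0 x) = - f1 (d0 x) := fun x => by
      have := congrArg (fun g => g x) h1; simpa [eq_neg_iff_add_eq_zero] using this
    have e2 : ∀ x, d0 (f1 x) = - f0 (d1 x) := fun x => by
      have := congrArg (fun g => g x) h2; simpa [eq_neg_iff_add_eq_zero] using this
    constructor <;> ext x <;>
      simp only [LinearMap.sub_apply, LinearMap.comp_apply, LinearMap.smul_apply]
    · rw [e2]; simp [sq0, sq1, map_smul, two_mul, add_smul, sub_neg_eq_add]
    · rw [e1]; simp [sq0, sq1, map_smul, two_mul, add_smul, sub_neg_eq_add]
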